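/- arXiv:1101.1490 — 3 statements merged into one kernel-verified Lean document; each statement's English description precedes it below -/
import Mathlib

section
/- Let φ be the morphism φ(A) = A^p B, φ(B) = A^q B with p > q ≥ 1 and U_n = |φ^n(A)|. Define w^(0) = B and w^(n) = B·φ(w^(n-1)). If n ∈ ℕ and N ≥ 0 satisfy U_N ≤ n < U_{N+1}, then |w^(N)| ≤ n < |w^(N+2)|. -/
/-- Number of occurrences of the letter `A` (encoded as `false`). -/
def countA (w : List Bool) : ℕ := w.count false

/-- Number of occurrences of the letter `B` (encoded as `true`). -/
def countB (w : List Bool) : ℕ := w.count true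

/-- Extension of a morphism (given on letters) to finite words. -/
def applyM (φ : Bool → List Bool) (w : List Bool) : List Bool := (w.map φ).flatten

/-- `w` is a factor of the infinite word `u`. -/
def IsFactor (u : ℕ → Bool) (w : List Bool) : Prop :=
  ∃ i, w = (List.range w.length).map (fun j => u (i + j))

/-- The prefix of length `n` of the infinite word `u`. -/
def prefWord (u : ℕ → Bool) (n : ℕ) : List Bool := (List.range n).map u

/-- The finite word `w` is a prefix of the infinite word `u`. -/
def IsPrefixOf (w : List Bool) (u : ℕ → Bool) : Prop := w = prefWord u w.length

/-- Abelian complexity: number of Parikh vectors of factors of length `n`. -/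
noncomputable def AC (u : ℕ → Bool) (n : ℕ) : ℕ :=
  Set.ncard {P : ℕ × ℕ | ∃ w, IsFactor u w ∧ w.length = n ∧ P = (countA w, countB w)}

/-- `n`-fold iterate of the morphism `φ` applied to the letter `a`. -/
def iterW (φ : Bool → List Bool) (n : ℕ) (a : Bool) : List Bool := (applyM φ)^[n] [a]

/-- The morphism `A ↦ AᵖB, B ↦ A^q` (simple Parry case). -/
def simpleM (p q : ℕ) : Bool → List Bool
  | false => List.replicate p false ++ [true]
  | true  => List.replicate q false

/-- The morphism `A ↦ AᵖB, B ↦ A^qB` (non-simple Parry case). -/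
def nonsimpleM (p q : ℕ) : Bool → List Bool
  | false => List.replicate p false ++ [true]
  | true  => List.replicate q false ++ [true]

/-- Greedy digits `(d_N, …, d_0)` of `x` in the base given by `U`
    (assuming `U 0 = 1`): `d_j = ⌊x_j / U_j⌋`, `x_{j-1} = x_j mod U_j`. -/
def gdigits (U : ℕ → ℕ) : ℕ → ℕ → List ℕ
  | 0, x => [x]
  | j+1, x => x / U (j+1) :: gdigits U j (x % U (j+1))

/-- The digit `d_j` of the normal `U`-representation `(d_N, …, d_0)` of `n`. -/
def dig (U : ℕ → ℕ) (N n j : ℕ) : ℕ := (gdigits U N n).getD (N - j) 0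

/-- The words `w⁽ⁿ⁾` of the non-simple Parry case: `w⁽⁰⁾ = B`, `w⁽ⁿ⁾ = B·φ(w⁽ⁿ⁻¹⁾)`. -/
def wNon (φ : Bool → List Bool) : ℕ → List Bool
  | 0 => [true]
  | n+1 => true :: applyM φ (wNon φ n)

/-- The words `w⁽ᴺ⁾ = B·φ(A^{q-1})·φ³(A^{q-1})⋯φ^{2N-1}(A^{q-1})` of the simple Parry case. -/
def wSim (φ : Bool → List Bool) (q : ℕ) (N : ℕ) : List Bool :=
  true :: ((List.range N).map
    (fun k => (applyM φ)^[2*k+1] (List.replicate (q-1) false))).flatten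

/-!
Write `U_m = |φ^m(A)|` and `V_m = |φ^m(B)|`. Since `φ^{m+1}(A) = (φ^m A)^p φ^m(B)` and
`φ^{m+1}(B) = (φ^m A)^q φ^m(B)`, we get `U_{m+1} = p U_m + V_m` and `V_{m+1} = q U_m + V_m`,
while `w^(m) = B · φ(B) ⋯ φ^m(B)` gives `|w^(m+1)| = |w^(m)| + V_{m+1}`.
Because `p ≥ q + 1`, the increment `V_{m+1}` is at most `U_{m+1} - U_m`, so `|w^(m)| ≤ U_m`
by induction; and because `q ≥ 1`, `|w^(N+2)| ≥ V_{N+2} ≥ q U_{N+1} ≥ U_{N+1}`.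
-/

section Morphism

variable (φ : Bool → List Bool)

theorem applyM_append : Function.Semiconj₂ (applyM φ) (· ++ ·) (· ++ ·) := fun u v => by
  simp [applyM]

theorem iterate_applyM_append (m : ℕ) (u v : List Bool) :
    (applyM φ)^[m] (u ++ v) = (applyM φ)^[m] u ++ (applyM φ)^[m] v :=
  (applyM_append φ).iterate m u v

theorem length_iterate_applyM (m : ℕ) (w : List Bool) :
    ((applyM φ)^[m] w).length = (w.map fun a => (iterW φ m a).length).sum := by
  induction w with
  | nil => simp [Function.iterate_fixed (show applyM φ [] = [] from rfl)]
  | cons a w ih => rw [← List.singleton_append, iterate_applyM_append]; simp [ih, iterW]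

theorem length_iterW_succ (m : ℕ) (a : Bool) :
    (iterW φ (m + 1) a).length = ((φ a).map fun b => (iterW φ m b).length).sum := by
  rw [iterW, Function.iterate_succ_apply, ← length_iterate_applyM]
  simp [applyM]

theorem wNon_succ (N : ℕ) : wNon φ (N + 1) = wNon φ N ++ iterW φ (N + 1) true := by
  induction N with
  | zero => simp [wNon, iterW, applyM]
  | succ N ih =>
    rw [iterW, Function.iterate_succ_apply', ← iterW]
    conv_lhs => rw [wNon, ih, applyM_append]
    rfl

end Morphism

section NonSimple

variable {p q : ℕ}

theorem length_iterW_nonsimpleM_succ (m : ℕ) (a : Bool) :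
    (iterW (nonsimpleM p q) (m + 1) a).length =
      (cond a q p) * (iterW (nonsimpleM p q) m false).length +
        (iterW (nonsimpleM p q) m true).length := by
  cases a <;> simp [length_iterW_succ, nonsimpleM, List.sum_replicate]

theorem length_wNon_le_length_iterW (hpq : q < p) (m : ℕ) :
    (wNon (nonsimpleM p q) m).length ≤ (iterW (nonsimpleM p q) m false).length := by
  induction m with
  | zero => simp [wNon, iterW]
  | succ m ih =>
    rw [wNon_succ, List.length_append, length_iterW_nonsimpleM_succ,
      length_iterW_nonsimpleM_succ]
    have hpU : (q + 1) * (iterW (nonsimpleM p q) m false).length ≤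
        p * (iterW (nonsimpleM p q) m false).length := Nat.mul_le_mul_right _ hpq
    simp only [cond_true, cond_false]
    nlinarith

theorem length_iterW_le_length_wNon (hq : 1 ≤ q) (N : ℕ) :
    (iterW (nonsimpleM p q) (N + 1) false).length ≤ (wNon (nonsimpleM p q) (N + 2)).length := by
  rw [wNon_succ, List.length_append, length_iterW_nonsimpleM_succ (N + 1) true, cond_true]
  nlinarith

end NonSimple

theorem stmt8_general (p q : ℕ) (hq : 1 ≤ q) (hpq : q < p)
    (φ : Bool → List Bool) (hφ : φ = nonsimpleM p q)
    (U : ℕ → ℕ) (hU : ∀ m, U m = (iterW φ m false).length)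
    (n N : ℕ) (h1 : U N ≤ n) (h2 : n < U (N+1)) :
    (wNon φ N).length ≤ n ∧ n < (wNon φ (N+2)).length := by
  subst hφ
  rw [hU] at h1 h2
  exact ⟨(length_wNon_le_length_iterW hpq N).trans h1,
    h2.trans_le (length_iterW_le_length_wNon hq N)⟩

/-- if `U_N ≤ n < U_{N+1}` then `|w⁽ᴺ⁾| ≤ n < |w⁽ᴺ⁺²⁾|` (non-simple case). -/
theorem stmt8 (p q : ℕ) (hq : 1 ≤ q) (hpq : q < p)
    (φ : Bool → List Bool) (hφ : φ = nonsimpleM p q)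
    (U : ℕ → ℕ) (hU : ∀ m, U m = (iterW φ m false).length)
    (n N : ℕ) (hn : 0 < n) (h1 : U N ≤ n) (h2 : n < U (N+1)) :
    (wNon φ N).length ≤ n ∧ n < (wNon φ (N+2)).length :=
  stmt8_general p q hq hpq φ hφ U hU n N h1 h2
end

section
/- Let φ be the morphism φ(A) = A^p B, φ(B) = A^q with integers p ≥ q ≥ 1, and let u_β be its fixed point lim φ^n(A). If B A^k B is a factor of u_β (with k ≥ 0), then k = p or k = q + p. -/
/-! In `φ(w)` every `B` is the last letter of the image `AᵖB` of an `A` of `w` and is followed by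
the image of the rest of `w`. So the run `Aᵏ` between two consecutive `B`s of `φ(w)` comes from a
block `Bᵇ A` of `w`, and `k = bq + p`. Images under `φ` never contain `BB`, because `φ(A)` and
`φ(B)` start with `A`; as every prefix of `u_β` lies in some `φ(φᵐ(A))`, this forces `b ≤ 1`. -/

theorem applyM_cons (φ : Bool → List Bool) (a : Bool) (w : List Bool) :
    applyM φ (a :: w) = φ a ++ applyM φ w := by
  simp [applyM]

theorem iterW_succ (φ : Bool → List Bool) (m : ℕ) (a : Bool) :
    iterW φ (m + 1) a = applyM φ (iterW φ m a) := by
  simp [iterW, Function.iterate_succ_apply']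

theorem prefWord_add (u : ℕ → Bool) (a b : ℕ) :
    prefWord u (a + b) = prefWord u a ++ (List.range b).map (fun j => u (a + j)) := by
  simp [prefWord, List.range_add]

theorem IsFactor.exists_infix_of_isPrefixOf {u : ℕ → Bool} {v : List Bool} (h : IsFactor u v) :
    ∃ n, ∀ w, IsPrefixOf w u → n ≤ w.length → v <:+: w := by
  obtain ⟨i, hv⟩ := h
  refine ⟨i + v.length, fun w hw hn => ?_⟩
  obtain ⟨r, hr⟩ := Nat.exists_eq_add_of_le hn
  rw [IsPrefixOf, hr, prefWord_add, prefWord_add, ← hv] at hw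
  exact ⟨_, _, hw.symm⟩

namespace SimpleParry

open List

variable {p q : ℕ}

theorem suffix_of_true_cons_suffix_replicate_false_append {x y : List Bool} (n : ℕ)
    (h : true :: x <:+ replicate n false ++ y) : true :: x <:+ y := by
  induction n with
  | zero => simpa using h
  | succ n ih =>
    rw [replicate_succ, cons_append, suffix_cons_iff] at h
    rcases h with h | h
    · simp at h
    · exact ih h

theorem replicate_false_append_true_prefix {k m : ℕ} {y : List Bool}
    (h : replicate k false ++ [true] <+: replicate m false ++ y) :
    m ≤ k ∧ replicate (k - m) false ++ [true] <+: y := by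
  induction m generalizing k with
  | zero => simpa using h
  | succ m ih =>
    cases k with
    | zero => simp [replicate_succ] at h
    | succ k =>
      rw [replicate_succ, replicate_succ, cons_append, cons_append, cons_prefix_cons] at h
      have := ih h.2
      exact ⟨by omega, by simpa using this.2⟩

theorem applyM_simpleM_ne_true_cons (hp : 1 ≤ p) (w x : List Bool) :
    applyM (simpleM p q) w ≠ true :: x := by
  induction w with
  | nil => simp [applyM]
  | cons a w ih =>
    obtain ⟨p, rfl⟩ := Nat.exists_eq_add_of_le' hp
    cases a
    · simp [applyM_cons, simpleM, replicate_succ]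
    · cases q with
      | zero => simpa [applyM_cons, simpleM] using ih
      | succ q => simp [applyM_cons, simpleM, replicate_succ]

theorem exists_suffix_of_true_cons_suffix_applyM {x w : List Bool}
    (h : true :: x <:+ applyM (simpleM p q) w) :
    ∃ w', false :: w' <:+ w ∧ x = applyM (simpleM p q) w' := by
  induction w with
  | nil => simp [applyM] at h
  | cons a w ih =>
    simp only [applyM_cons, simpleM] at h
    cases a
    · rw [append_assoc, singleton_append] at h
      rcases suffix_cons_iff.mp (suffix_of_true_cons_suffix_replicate_false_append p h) with h | h
      · exact ⟨w, suffix_refl _, (cons_inj_right true).mp h⟩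
      · obtain ⟨w', hw', rfl⟩ := ih h
        exact ⟨w', hw'.trans (suffix_cons _ _), rfl⟩
    · obtain ⟨w', hw', rfl⟩ := ih (suffix_of_true_cons_suffix_replicate_false_append q h)
      exact ⟨w', hw'.trans (suffix_cons _ _), rfl⟩

theorem exists_suffix_of_true_cons_infix_applyM {x w : List Bool}
    (h : true :: x <:+: applyM (simpleM p q) w) :
    ∃ w', false :: w' <:+ w ∧ x <+: applyM (simpleM p q) w' := by
  obtain ⟨t, hxt, ht⟩ := infix_iff_prefix_suffix.mp h
  obtain ⟨y, rfl⟩ : ∃ y, t = true :: y := by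
    cases t with
    | nil => simp at hxt
    | cons b y =>
      obtain rfl := (cons_prefix_cons.mp hxt).1
      exact ⟨y, rfl⟩
  obtain ⟨w', hw', rfl⟩ := exists_suffix_of_true_cons_suffix_applyM ht
  exact ⟨w', hw', (cons_prefix_cons.mp hxt).2⟩

theorem not_true_true_infix_applyM (hp : 1 ≤ p) (w : List Bool) :
    ¬ [true, true] <:+: applyM (simpleM p q) w := by
  intro h
  obtain ⟨w', -, ⟨t, ht⟩⟩ := exists_suffix_of_true_cons_infix_applyM h
  exact applyM_simpleM_ne_true_cons hp w' t ht.symm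

theorem exists_replicate_true_of_prefix_applyM {k : ℕ} {w : List Bool}
    (h : replicate k false ++ [true] <+: applyM (simpleM p q) w) :
    ∃ b r, w = replicate b true ++ false :: r ∧ k = b * q + p := by
  induction w generalizing k with
  | nil => simp [applyM] at h
  | cons a w ih =>
    cases a
    · obtain ⟨hpk, hk⟩ := replicate_false_append_true_prefix (m := p)
        (y := true :: applyM (simpleM p q) w) (by simpa [applyM_cons, simpleM] using h)
      obtain rfl : k = p := by
        cases hkp : k - p with
        | zero => omega
        | succ j => simp [hkp, replicate_succ] at hk
      exact ⟨0, w, rfl, by simp⟩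
    · obtain ⟨hqk, hk⟩ := replicate_false_append_true_prefix (m := q)
        (by simpa [applyM_cons, simpleM] using h)
      obtain ⟨b, r, rfl, hb⟩ := ih hk
      exact ⟨b + 1, r, rfl, by rw [Nat.succ_mul]; omega⟩

theorem eq_or_eq_of_true_replicate_true_infix_applyM {k : ℕ} {w : List Bool}
    (hw : ¬ [true, true] <:+: w)
    (h : true :: (replicate k false ++ [true]) <:+: applyM (simpleM p q) w) :
    k = p ∨ k = q + p := by
  obtain ⟨w', hw', hk⟩ := exists_suffix_of_true_cons_infix_applyM h
  obtain ⟨b, r, rfl, rfl⟩ := exists_replicate_true_of_prefix_applyM hk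
  match b, hw' with
  | 0, _ => simp
  | 1, _ => simp
  | b + 2, hw' =>
    exact absurd (IsInfix.trans ⟨[false], replicate b true ++ false :: r, by simp [replicate_succ]⟩
      hw'.isInfix) hw

theorem length_le_length_applyM (hq : 1 ≤ q) (w : List Bool) :
    w.length ≤ (applyM (simpleM p q) w).length := by
  induction w with
  | nil => simp
  | cons a w ih =>
    cases a <;> simp [applyM_cons, simpleM] <;> omega

theorem exists_iterW_eq_false_cons (hp : 1 ≤ p) (m : ℕ) :
    ∃ r, iterW (simpleM p q) m false = false :: r := by
  induction m with
  | zero => exact ⟨[], rfl⟩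
  | succ m ih =>
    obtain ⟨r, hr⟩ := ih
    obtain ⟨p, rfl⟩ := Nat.exists_eq_add_of_le' hp
    exact ⟨replicate p false ++ true :: applyM (simpleM (p + 1) q) r,
      by simp [iterW_succ, hr, applyM_cons, simpleM, replicate_succ]⟩

theorem lt_length_iterW (hp : 1 ≤ p) (hq : 1 ≤ q) (m : ℕ) :
    m < (iterW (simpleM p q) m false).length := by
  induction m with
  | zero => simp [iterW]
  | succ m ih =>
    obtain ⟨r, hr⟩ := exists_iterW_eq_false_cons (q := q) hp m
    have hr' := length_le_length_applyM (p := p) hq r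
    rw [hr, length_cons] at ih
    rw [iterW_succ, hr, applyM_cons, length_append]
    simp only [simpleM, length_append, length_replicate, length_singleton]
    omega

end SimpleParry

/-- in the simple Parry case, if `B Aᵏ B` is a factor of `u_β`,
then `k = p` or `k = q + p`. -/
theorem stmt10 (p q : ℕ) (hq : 1 ≤ q) (hpq : q ≤ p)
    (φ : Bool → List Bool) (hφ : φ = simpleM p q)
    (ub : ℕ → Bool) (hub : ∀ m, IsPrefixOf (iterW φ m false) ub)
    (k : ℕ)
    (hfac : IsFactor ub (true :: (List.replicate k false ++ [true]))) :
    k = p ∨ k = q + p := by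
  subst hφ
  have hp : 1 ≤ p := hq.trans hpq
  obtain ⟨n, hn⟩ := hfac.exists_infix_of_isPrefixOf
  have hlen : n ≤ (iterW (simpleM p q) (n + 2) false).length :=
    (Nat.le_add_right n 2).trans (SimpleParry.lt_length_iterW hp hq _).le
  have hinfix := hn _ (hub (n + 2)) hlen
  rw [iterW_succ, iterW_succ] at hinfix
  exact SimpleParry.eq_or_eq_of_true_replicate_true_infix_applyM
    (SimpleParry.not_true_true_infix_applyM hp _) hinfix
end

section
/- Let φ be the morphism φ(A) = A^p B, φ(B) = A^q with p ≥ q > 1. Define w^(0) = B and w^(n) for n ≥ 1 by A^p · w^(n) = φ^2(w^(n-1)). Then for all n ≥ 0, w^(n) = B · φ(A^{q-1}) · φ^3(A^{q-1}) · φ^5(A^{q-1}) ⋯ φ^{2n-1}(A^{q-1}), and w^(n) is a suffix of φ^{2n}(B). -/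
/- `wSim φ q` is `B` followed by the odd iterates `φ^{2k+1}(A^{q-1})`, so applying `φ²`
shifts every block to the next odd iterate, while the leading `B` becomes
`φ²(B) = φ(A^q) = Aᵖ·B·φ(A^{q-1})`, which supplies the new first block after the prefix `Aᵖ`.
Cancelling `Aᵖ` gives `w⁽ⁿ⁾ = wSim φ q n` by induction, and since `φ` maps suffixes to suffixes,
`w⁽ⁿ⁺¹⁾ <:+ φ²(w⁽ⁿ⁾) <:+ φ²(φ^{2n}(B))`. -/

section applyM

variable (φ : Bool → List Bool)

lemma applyM_append_s11 (u v : List Bool) : applyM φ (u ++ v) = applyM φ u ++ applyM φ v := by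
  simp [applyM]

lemma applyM_flatten (L : List (List Bool)) :
    applyM φ L.flatten = (L.map (applyM φ)).flatten := by
  simp only [applyM, List.map_flatten, List.flatten_flatten, List.map_map]
  rfl

variable {φ} in
lemma applyM_suffix_applyM {u v : List Bool} (h : u <:+ v) : applyM φ u <:+ applyM φ v := by
  obtain ⟨t, rfl⟩ := h
  exact ⟨applyM φ t, (applyM_append_s11 φ t u).symm⟩

lemma iterW_add_two (n : ℕ) (a : Bool) :
    iterW φ (n + 2) a = applyM φ (applyM φ (iterW φ n a)) := by
  simp only [iterW, Function.iterate_succ_apply']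

lemma applyM_applyM_wSim {q : ℕ} {u : List Bool}
    (hB : applyM φ (applyM φ [true]) = u ++ true :: applyM φ (List.replicate (q - 1) false))
    (n : ℕ) : applyM φ (applyM φ (wSim φ q n)) = u ++ wSim φ q (n + 1) := by
  have hblock : ∀ k, applyM φ (applyM φ ((applyM φ)^[2 * k + 1] (List.replicate (q - 1) false)))
      = (applyM φ)^[2 * (k + 1) + 1] (List.replicate (q - 1) false) := fun k => by
    simp only [show 2 * (k + 1) + 1 = 2 * k + 1 + 1 + 1 by ring, Function.iterate_succ_apply']
  rw [wSim, ← List.singleton_append, applyM_append_s11, applyM_append_s11, hB, applyM_flatten,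
    applyM_flatten, List.map_map, List.map_map, wSim, List.range_succ_eq_map]
  simp only [List.map_cons, List.flatten_cons, List.cons_append, List.append_assoc,
    Function.comp_def, hblock, List.map_map, Nat.succ_eq_add_one]
  rfl

end applyM

lemma applyM_simpleM_simpleM_true {p q : ℕ} (hq : 1 ≤ q) :
    applyM (simpleM p q) (applyM (simpleM p q) [true]) =
      List.replicate p false ++ true :: applyM (simpleM p q) (List.replicate (q - 1) false) := by
  obtain ⟨r, rfl⟩ := Nat.exists_eq_add_of_le' hq
  simp [applyM, simpleM, List.replicate_succ]

theorem stmt11_general (p q : ℕ) (hq : 1 < q)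
    (φ : Bool → List Bool) (hφ : φ = simpleM p q)
    (w : ℕ → List Bool) (hw0 : w 0 = [true])
    (hwrec : ∀ n, List.replicate p false ++ w (n+1) = applyM φ (applyM φ (w n))) :
    ∀ n, w n = wSim φ q n ∧ w n <:+ iterW φ (2*n) true := by
  have hB := hφ ▸ applyM_simpleM_simpleM_true (p := p) hq.le
  intro n
  induction n with
  | zero => simp [hw0, wSim, iterW]
  | succ n ih =>
    obtain ⟨heq, hsuf⟩ := ih
    refine ⟨List.append_cancel_left ((hwrec n).trans ?_), ?_⟩
    · rw [heq, applyM_applyM_wSim φ hB]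
    · calc w (n + 1) <:+ applyM φ (applyM φ (w n)) := ⟨_, hwrec n⟩
        _ <:+ applyM φ (applyM φ (iterW φ (2 * n) true)) :=
          applyM_suffix_applyM (applyM_suffix_applyM hsuf)
        _ = iterW φ (2 * (n + 1)) true := (iterW_add_two φ _ _).symm

/-- in the simple case with `q > 1`, the words defined by `w⁽⁰⁾ = B`,
`Aᵖ·w⁽ⁿ⁾ = φ²(w⁽ⁿ⁻¹⁾)` satisfy
`w⁽ⁿ⁾ = B·φ(A^{q-1})·φ³(A^{q-1})⋯φ^{2n-1}(A^{q-1})`, and `w⁽ⁿ⁾` is a suffix of `φ^{2n}(B)`. -/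
theorem stmt11 (p q : ℕ) (hq : 1 < q) (hpq : q ≤ p)
    (φ : Bool → List Bool) (hφ : φ = simpleM p q)
    (w : ℕ → List Bool) (hw0 : w 0 = [true])
    (hwrec : ∀ n, List.replicate p false ++ w (n+1) = applyM φ (applyM φ (w n))) :
    ∀ n, w n = wSim φ q n ∧ w n <:+ iterW φ (2*n) true :=
  stmt11_general p q hq φ hφ w hw0 hwrec
end
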